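/- arXiv:1805.01196 — 4 statements merged into one kernel-verified Lean document; each statement's English description precedes it below -/
import Mathlib

section
/- Let m ≥ 1 and 0 ≤ k ≤ m. Then the cardinality of Θ_k equals 2·binom(2m,k) if k < m, and equals binom(2m,m) − 1 if k = m. -/
/-! Flipping the odd-position bits, `u ↦ u ^^^ ∑_{i<m} 2^(2i+1)`, replaces `O(u)` by `m - O(u)`
and keeps `E(u)`, so it maps `{u < 4^m : O(u) - E(u) = m - k}` bijectively onto the numbers below
`4^m` of binary weight `k`; the even-position mask does the same for `E(u) - O(u) = m - k`.
For `k < m` the two sets are disjoint, for `k = m` they coincide. As `ζ` has order `4^m - 1`, the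
exponents below `4^m` give distinct powers except for `ζ^(4^m - 1) = ζ^0`; both `0` and `4^m - 1`
have `O = E`, so exactly one power is lost when `k = m` and none when `k < m`. -/

/-- `wt₂(u)`: the number of ones among the binary digits `u_0, …, u_{2m-1}` of `u`. -/
def wt2 (m u : ℕ) : ℕ := ((Finset.range (2 * m)).filter fun i => u.testBit i).card

/-- `O(u) = #{0 ≤ i ≤ m-1 : u_{2i+1} = 1}`. -/
def Ofun (m u : ℕ) : ℕ := ((Finset.range m).filter fun i => u.testBit (2 * i + 1)).card

/-- `E(u) = #{0 ≤ i ≤ m-1 : u_{2i} = 1}`. -/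
def Efun (m u : ℕ) : ℕ := ((Finset.range m).filter fun i => u.testBit (2 * i)).card

/-- `Θ_k = {ζ^u : 0 ≤ u ≤ 4^m - 1, |O(u) - E(u)| = m - k}`. -/
def ThetaK {K : Type*} [Monoid K] (m : ℕ) (ζ : K) (k : ℕ) : Set K :=
  {z | ∃ u : ℕ, u ≤ 4 ^ m - 1 ∧ ((Ofun m u : ℤ) - (Efun m u : ℤ)).natAbs = m - k ∧ z = ζ ^ u}

/-- `Θ^{(r)} = {ζ^u : 0 ≤ u ≤ 4^m - 1, wt₂(u) = 2m - r}`. -/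
def ThetaR {K : Type*} [Monoid K] (m : ℕ) (ζ : K) (r : ℕ) : Set K :=
  {z | ∃ u : ℕ, u ≤ 4 ^ m - 1 ∧ wt2 m u = 2 * m - r ∧ z = ζ ^ u}

open Finset

theorem Nat.testBit_sum_two_pow (s : Finset ℕ) (j : ℕ) :
    (∑ i ∈ s, 2 ^ i).testBit j ↔ j ∈ s := by
  rw [← Nat.mem_bitIndices, ← List.mem_toFinset, toFinset_bitIndices_sum_two_pow]

theorem Finset.sum_range_two_mul {M : Type*} [AddCommMonoid M] (f : ℕ → M) (m : ℕ) :
    ∑ i ∈ range (2 * m), f i = ∑ i ∈ range m, (f (2 * i) + f (2 * i + 1)) := by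
  induction m with
  | zero => simp
  | succ m ih =>
    rw [mul_add, mul_one, sum_range_succ, sum_range_succ, sum_range_succ, ih, add_assoc]

section BitSets

variable {n : ℕ}

theorem filter_testBit_sum_two_pow {s : Finset ℕ} (hs : s ⊆ range n) :
    {i ∈ range n | (∑ j ∈ s, 2 ^ j).testBit i} = s := by
  ext i
  simp only [mem_filter, Nat.testBit_sum_two_pow]
  exact ⟨And.right, fun h => ⟨hs h, h⟩⟩

theorem sum_two_pow_filter_testBit {u : ℕ} (hu : u < 2 ^ n) :
    ∑ i ∈ {i ∈ range n | u.testBit i}, 2 ^ i = u := by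
  refine Nat.eq_of_testBit_eq fun j => Bool.eq_iff_iff.2 ?_
  rw [Nat.testBit_sum_two_pow, mem_filter, mem_range]
  refine ⟨And.right, fun h => ⟨?_, h⟩⟩
  by_contra! hj
  simp [Nat.testBit_lt_two_pow (hu.trans_le (Nat.pow_le_pow_right two_pos hj))] at h

theorem card_filter_card_filter_testBit (n k : ℕ) :
    #{u ∈ range (2 ^ n) | #{i ∈ range n | u.testBit i} = k} = n.choose k := by
  calc _ = #(powersetCard k (range n)) := by
        refine card_nbij' (fun u => {i ∈ range n | u.testBit i}) (fun s => ∑ i ∈ s, 2 ^ i)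
          ?_ ?_ ?_ ?_
        · intro u hu
          simp only [mem_coe, mem_filter, mem_powersetCard] at hu ⊢
          exact ⟨filter_subset _ _, hu.2⟩
        · intro s hs
          simp only [mem_coe, mem_powersetCard] at hs
          simp only [mem_coe, mem_filter, mem_range, filter_testBit_sum_two_pow hs.1]
          exact ⟨Nat.geomSum_lt le_rfl fun i hi => mem_range.1 (hs.1 hi), hs.2⟩
        · intro u hu
          exact sum_two_pow_filter_testBit (mem_range.1 (mem_filter.1 hu).1)
        · intro s hs
          exact filter_testBit_sum_two_pow (mem_powersetCard.1 hs).1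
    _ = n.choose k := by rw [card_powersetCard, card_range]

end BitSets

section XorMask

variable {ι : Type*} (s : Finset ι) (g : ι → ℕ) (u : ℕ) {M : ℕ}

theorem card_filter_testBit_xor_of_testBit (hM : ∀ i ∈ s, M.testBit (g i)) :
    #{i ∈ s | (u ^^^ M).testBit (g i)} = #s - #{i ∈ s | u.testBit (g i)} := by
  rw [← card_filter_add_card_filter_not (s := s) fun i => u.testBit (g i),
    Nat.add_sub_cancel_left]
  exact congrArg card (filter_congr fun i hi => by simp [hM i hi])

theorem filter_testBit_xor_of_not_testBit (hM : ∀ i ∈ s, M.testBit (g i) = false) :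
    {i ∈ s | (u ^^^ M).testBit (g i)} = {i ∈ s | u.testBit (g i)} :=
  filter_congr fun i hi => by simp [hM i hi]

end XorMask

def parityBitCount (m p u : ℕ) : ℕ := #{i ∈ range m | u.testBit (2 * i + p)}

def parityMask (m p : ℕ) : ℕ := ∑ j ∈ (range m).image (2 * · + p), 2 ^ j

section Parity

variable {m p q : ℕ}

theorem Ofun_eq_parityBitCount (m u : ℕ) : Ofun m u = parityBitCount m 1 u := rfl

theorem Efun_eq_parityBitCount (m u : ℕ) : Efun m u = parityBitCount m 0 u := rfl

theorem parityBitCount_le (m p u : ℕ) : parityBitCount m p u ≤ m :=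
  (card_filter_le _ _).trans (card_range m).le

theorem parityBitCount_zero (m p : ℕ) : parityBitCount m p 0 = 0 := by
  simp [parityBitCount]

theorem parityBitCount_two_pow_sub_one (hp : p < 2) : parityBitCount m p (2 ^ (2 * m) - 1) = m := by
  rw [parityBitCount, filter_true_of_mem fun i hi => ?_, card_range]
  simp only [Nat.testBit_two_pow_sub_one, decide_eq_true_eq]
  have := mem_range.1 hi
  omega

theorem wt2_eq_parityBitCount_add (hpq : p + q = 1) (u : ℕ) :
    wt2 m u = parityBitCount m p u + parityBitCount m q u := by
  have h : wt2 m u = parityBitCount m 0 u + parityBitCount m 1 u := by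
    simp only [wt2, parityBitCount, card_filter, sum_range_two_mul, sum_add_distrib, add_zero]
  obtain ⟨rfl, rfl⟩ | ⟨rfl, rfl⟩ : p = 0 ∧ q = 1 ∨ p = 1 ∧ q = 0 := by omega
  · exact h
  · rw [h, add_comm]

theorem testBit_parityMask (j : ℕ) : (parityMask m p).testBit j ↔ ∃ i < m, 2 * i + p = j := by
  rw [parityMask, Nat.testBit_sum_two_pow]
  simp

theorem parityMask_lt (hp : p < 2) : parityMask m p < 2 ^ (2 * m) := by
  refine Nat.geomSum_lt le_rfl fun j hj => ?_
  obtain ⟨i, hi, rfl⟩ := mem_image.1 hj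
  have := mem_range.1 hi
  omega

theorem parityBitCount_xor_parityMask_self (u : ℕ) :
    parityBitCount m p (u ^^^ parityMask m p) = m - parityBitCount m p u := by
  rw [parityBitCount, card_filter_testBit_xor_of_testBit _ _ _
    fun i hi => (testBit_parityMask _).2 ⟨i, mem_range.1 hi, rfl⟩, card_range, parityBitCount]

theorem parityBitCount_xor_parityMask_of_add_eq_one (hpq : p + q = 1) (u : ℕ) :
    parityBitCount m q (u ^^^ parityMask m p) = parityBitCount m q u := by
  refine congrArg card (filter_testBit_xor_of_not_testBit _ _ _ fun i _ => ?_)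
  rw [Bool.eq_false_iff, ne_eq, testBit_parityMask]
  omega

end Parity

theorem card_filter_add_eq_of_xor {m : ℕ} {A B : ℕ → ℕ} {mask : ℕ}
    (hmask : mask < 2 ^ (2 * m)) (hA : ∀ u, A (u ^^^ mask) = m - A u)
    (hB : ∀ u, B (u ^^^ mask) = B u) (hA_le : ∀ u, A u ≤ m)
    (hwt : ∀ u, wt2 m u = A u + B u) (k : ℕ) :
    #{u ∈ range (2 ^ (2 * m)) | A u + k = m + B u} = (2 * m).choose k := by
  rw [← card_filter_card_filter_testBit]
  refine card_nbij' (· ^^^ mask) (· ^^^ mask) ?_ ?_ ?_ ?_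
  all_goals intro u hu
  all_goals simp only [mem_coe, mem_filter, mem_range] at hu ⊢
  · refine ⟨Nat.xor_lt_two_pow hu.1 hmask, ?_⟩
    rw [← wt2, hwt, hA, hB]
    have := hA_le u
    omega
  · refine ⟨Nat.xor_lt_two_pow hu.1 hmask, ?_⟩
    rw [← wt2, hwt] at hu
    rw [hA, hB]
    have := hA_le u
    omega
  all_goals simp

theorem card_filter_Ofun_add_eq (m k : ℕ) :
    #{u ∈ range (2 ^ (2 * m)) | Ofun m u + k = m + Efun m u} = (2 * m).choose k :=
  card_filter_add_eq_of_xor (parityMask_lt one_lt_two)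
    (parityBitCount_xor_parityMask_self (p := 1))
    (parityBitCount_xor_parityMask_of_add_eq_one (p := 1) (q := 0) rfl) (parityBitCount_le m 1)
    (wt2_eq_parityBitCount_add (p := 1) (q := 0) rfl) k

theorem card_filter_Efun_add_eq (m k : ℕ) :
    #{u ∈ range (2 ^ (2 * m)) | Efun m u + k = m + Ofun m u} = (2 * m).choose k :=
  card_filter_add_eq_of_xor (parityMask_lt two_pos)
    (parityBitCount_xor_parityMask_self (p := 0))
    (parityBitCount_xor_parityMask_of_add_eq_one (p := 0) (q := 1) rfl) (parityBitCount_le m 0)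
    (wt2_eq_parityBitCount_add (p := 0) (q := 1) rfl) k

def thetaExponents (m k : ℕ) : Finset ℕ :=
  {u ∈ range (2 ^ (2 * m)) | ((Ofun m u : ℤ) - (Efun m u : ℤ)).natAbs = m - k}

theorem ThetaK_eq_image {K : Type*} [Monoid K] (m : ℕ) (ζ : K) (k : ℕ) :
    ThetaK m ζ k = (ζ ^ ·) '' (thetaExponents m k : Set ℕ) := by
  have h4 : 4 ^ m = 2 ^ (2 * m) := by rw [pow_mul]; norm_num
  have hpos : 0 < 2 ^ (2 * m) := by positivity
  ext z
  simp only [ThetaK, thetaExponents, h4, Set.mem_ofPred_eq, Set.mem_image, coe_filter, mem_range]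
  constructor
  · rintro ⟨u, hu, habs, rfl⟩
    exact ⟨u, ⟨by omega, habs⟩, rfl⟩
  · rintro ⟨u, ⟨hu, habs⟩, rfl⟩
    exact ⟨u, by omega, habs, rfl⟩

theorem natAbs_sub_eq_sub_iff {a b m k : ℕ} (hk : k ≤ m) :
    ((a : ℤ) - b).natAbs = m - k ↔ a + k = m + b ∨ b + k = m + a := by
  omega

theorem card_thetaExponents_of_lt {m k : ℕ} (hk : k < m) :
    #(thetaExponents m k) = 2 * (2 * m).choose k := by
  rw [thetaExponents, filter_congr fun u _ => natAbs_sub_eq_sub_iff hk.le, filter_or,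
    card_union_of_disjoint (disjoint_filter.2 fun u _ h₁ h₂ => by omega),
    card_filter_Ofun_add_eq, card_filter_Efun_add_eq, ← two_mul]

theorem card_thetaExponents_self (m : ℕ) : #(thetaExponents m m) = (2 * m).choose m := by
  have h (u : ℕ) :
      ((Ofun m u : ℤ) - Efun m u).natAbs = m - m ↔ Ofun m u + m = m + Efun m u := by
    omega
  rw [thetaExponents, filter_congr fun u _ => h u, card_filter_Ofun_add_eq]

theorem two_pow_sub_one_mem_thetaExponents_iff {m k : ℕ} :
    2 ^ (2 * m) - 1 ∈ thetaExponents m k ↔ m ≤ k := by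
  rw [thetaExponents, mem_filter, Ofun_eq_parityBitCount, Efun_eq_parityBitCount,
    parityBitCount_two_pow_sub_one one_lt_two, parityBitCount_two_pow_sub_one two_pos, sub_self,
    Int.natAbs_zero, mem_range]
  have := Nat.one_le_two_pow (n := 2 * m)
  omega

theorem zero_mem_thetaExponents_iff {m k : ℕ} : 0 ∈ thetaExponents m k ↔ m ≤ k := by
  rw [thetaExponents, mem_filter, Ofun_eq_parityBitCount, Efun_eq_parityBitCount,
    parityBitCount_zero, parityBitCount_zero, mem_range]
  have := Nat.one_le_two_pow (n := 2 * m)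
  omega

theorem IsPrimitiveRoot.ncard_image_pow {M : Type*} [CommMonoid M] {ζ : M} {n : ℕ}
    (hζ : IsPrimitiveRoot ζ n) (hn : 0 < n) {S : Finset ℕ} (hS : ∀ u ∈ S, u ≤ n)
    (h0 : n ∈ S → 0 ∈ S) : ((ζ ^ ·) '' (S : Set ℕ)).ncard = #(S.erase n) := by
  have himage : (ζ ^ ·) '' (S : Set ℕ) = (ζ ^ ·) '' (S.erase n : Set ℕ) := by
    by_cases hnS : n ∈ S
    · nth_rewrite 1 [← insert_erase hnS]
      rw [coe_insert, Set.image_insert_eq]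
      refine Set.insert_eq_of_mem ⟨0, mem_erase.2 ⟨hn.ne, h0 hnS⟩, ?_⟩
      simp [hζ.pow_eq_one]
    · rw [erase_eq_of_notMem hnS]
  rw [himage, Set.InjOn.ncard_image, Set.ncard_coe_finset]
  intro a ha b hb hab
  have hlt (c : ℕ) (hc : c ∈ (S.erase n : Set ℕ)) : c < n := by
    obtain ⟨hcn, hcS⟩ := mem_erase.1 hc
    exact lt_of_le_of_ne (hS c hcS) hcn
  exact hζ.pow_inj (hlt a ha) (hlt b hb) hab

theorem stmt5_general (m : ℕ) (hm : 1 ≤ m) (K : Type*) [Field K]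
    (ζ : K) (hζ : IsPrimitiveRoot ζ (2 ^ (2 * m) - 1))
    (k : ℕ) :
    (k < m → (ThetaK m ζ k).ncard = 2 * Nat.choose (2 * m) k) ∧
      (k = m → (ThetaK m ζ k).ncard = Nat.choose (2 * m) m - 1) := by
  have hN : 0 < 2 ^ (2 * m) - 1 := by
    have := Nat.one_lt_two_pow (n := 2 * m) (by omega)
    omega
  have hle : ∀ u ∈ thetaExponents m k, u ≤ 2 ^ (2 * m) - 1 := fun u hu =>
    Nat.le_sub_one_of_lt (mem_range.1 (mem_filter.1 hu).1)
  rw [ThetaK_eq_image, hζ.ncard_image_pow hN hle fun h =>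
    zero_mem_thetaExponents_iff.2 (two_pow_sub_one_mem_thetaExponents_iff.1 h)]
  refine ⟨fun hkm => ?_, fun hkm => ?_⟩
  · rw [erase_eq_of_notMem (two_pow_sub_one_mem_thetaExponents_iff.not.2 (by omega)),
      card_thetaExponents_of_lt hkm]
  · subst hkm
    rw [card_erase_of_mem (two_pow_sub_one_mem_thetaExponents_iff.2 le_rfl),
      card_thetaExponents_self]

/-- Let `m ≥ 1` and `0 ≤ k ≤ m`. Then `|Θ_k| = 2·binom(2m,k)` if `k < m`,
and `|Θ_m| = binom(2m,m) - 1`. -/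
theorem stmt5 (m : ℕ) (hm : 1 ≤ m) (K : Type*) [Field K] [Algebra (ZMod 2) K]
    [IsAlgClosure (ZMod 2) K] (ζ : K) (hζ : IsPrimitiveRoot ζ (2 ^ (2 * m) - 1))
    (k : ℕ) (hk : k ≤ m) :
    (k < m → (ThetaK m ζ k).ncard = 2 * Nat.choose (2 * m) k) ∧
      (k = m → (ThetaK m ζ k).ncard = Nat.choose (2 * m) m - 1) :=
  stmt5_general m hm K ζ hζ k
end

section
/- Let V be a 2m-dimensional vector space over 𝔽₂ and let * denote the Schur (coordinatewise) product on 𝔽₂^V, i.e. (c*d)(v) := c(v)·d(v). If m ≥ 3 then there exist c, d ∈ R(3,2m) with c*d ∉ R(5,2m), and if m ≥ 4 then there exist c, d ∈ R(4,2m) with c*d ∉ R(6,2m). In particular, for m ≥ 4 neither the chain R(0,2m) ⊆ R(2,2m) ⊆ … ⊆ R(2m−2,2m) nor the chain R(1,2m) ⊆ R(3,2m) ⊆ … ⊆ R(2m−1,2m) is closed under the Schur product. -/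
noncomputable section

open scoped Pointwise

open Classical in
/-- The characteristic function (with values in `𝔽₂`) of a subset `S ⊆ V`. -/
noncomputable def chi {V : Type*} (S : Set V) : V → ZMod 2 := fun v => if v ∈ S then 1 else 0

/-- The Reed-Muller code `R(r, 2m)` of length `2^{2m}`, spanned by the characteristic
functions of affine subspaces `a + U` with `dim U = 2m - r`; `R(r,2m) = 0` for `r < 0`. -/
noncomputable def RM (V : Type*) [AddCommGroup V] [Module (ZMod 2) V] (m : ℕ) (r : ℤ) :
    Submodule (ZMod 2) (V → ZMod 2) :=
  if r < 0 then ⊥ else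
    Submodule.span (ZMod 2)
      {f | ∃ (a : V) (U : Submodule (ZMod 2) V),
        Module.finrank (ZMod 2) U = 2 * m - r.toNat ∧ f = chi ((a + ·) '' (U : Set V))}

/-- `T_s`: the subspaces spanned by `s`-element subsets of the fixed basis. -/
def Tfam {V : Type*} [AddCommGroup V] [Module (ZMod 2) V] {m : ℕ}
    (b : Module.Basis (Fin (2 * m)) (ZMod 2) V) (s : ℕ) : Set (Submodule (ZMod 2) V) :=
  {U | ∃ S : Finset (Fin (2 * m)), S.card = s ∧ U = Submodule.span (ZMod 2) (⇑b '' ↑S)}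

end

/-- A chain of codes `C_0 ⊆ C_1 ⊆ … ⊆ C_{s-1}` is closed under the Schur (coordinatewise)
product if the Schur product of two codewords of a member lies in the next member. -/
def SchurClosed {V : Type*} (C : ℕ → Submodule (ZMod 2) (V → ZMod 2)) (s : ℕ) : Prop :=
  ∀ i, i + 1 < s → ∀ c ∈ C i, ∀ d ∈ C i, c * d ∈ C (i + 1)

/-!
The Schur product of the indicators of two codimension-`r` subspaces meeting in codimension `2r`
is the indicator of their intersection `U`. Pairing it with the indicator of a complement `W` of
`U` (so `dim W = 2r`) gives `|W ∩ U| = 1`. On the other hand every generator `χ_{a+U'}` of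
`R(s, 2m)` with `s < 2r` pairs to zero with `χ_W`: as `dim W + dim U' > 2m`, the subspace
`W ∩ U'` is nonzero, and `W ∩ (a + U')` is empty or one of its cosets, hence of even size.
-/

open Module Submodule

section Chi

variable {V : Type*}

theorem chi_mul_chi (S T : Set V) : chi S * chi T = chi (S ∩ T) := by
  funext v
  by_cases hS : v ∈ S <;> by_cases hT : v ∈ T <;> simp [chi, hS, hT]

theorem sum_chi [Fintype V] (S : Set V) : ∑ v, chi S v = S.ncard := by
  classical
  rw [Set.ncard_eq_toFinset_card']
  simp [chi, Finset.sum_boole, Set.toFinset_card]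

theorem chi_dotProduct_chi [Fintype V] (S T : Set V) : chi S ⬝ᵥ chi T = (S ∩ T).ncard := by
  simp only [dotProduct, ← Pi.mul_apply, chi_mul_chi, sum_chi]

end Chi

section Coset

variable {K V : Type*} [Ring K] [AddCommGroup V] [Module K V]

theorem inter_coset_eq_image_add {W U : Submodule K V} {a x : V} (hxW : x ∈ W)
    (hxU : x ∈ (a + ·) '' (U : Set V)) :
    (W : Set V) ∩ (a + ·) '' U = (x + ·) '' ↑(W ⊓ U) := by
  obtain ⟨u₀, hu₀, rfl⟩ := hxU
  ext y
  constructor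
  · rintro ⟨hyW, u, hu, rfl⟩
    refine ⟨u - u₀, ⟨by simpa using W.sub_mem hyW hxW, U.sub_mem hu hu₀⟩, ?_⟩
    show a + u₀ + (u - u₀) = a + u
    abel
  · rintro ⟨z, ⟨hzW, hzU⟩, rfl⟩
    exact ⟨W.add_mem hxW hzW, u₀ + z, U.add_mem hu₀ hzU, by simp only; abel⟩

end Coset

section Parity

variable {V : Type*} [AddCommGroup V] [Module (ZMod 2) V]

theorem even_ncard_inter_coset [Finite V] {W U : Submodule (ZMod 2) V}
    (hWU : finrank (ZMod 2) V < finrank (ZMod 2) W + finrank (ZMod 2) U) (a : V) :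
    Even ((W : Set V) ∩ (a + ·) '' U).ncard := by
  rcases Set.eq_empty_or_nonempty ((W : Set V) ∩ (a + ·) '' U) with h | ⟨x, hxW, hxU⟩
  · rw [h, Set.ncard_empty]
    exact Even.zero
  have hinf : 0 < finrank (ZMod 2) ↥(W ⊓ U) := by
    have := Submodule.finrank_sup_add_finrank_inf_eq W U
    have := (W ⊔ U).finrank_le
    omega
  rw [inter_coset_eq_image_add hxW hxU, Set.ncard_image_of_injective _ (add_right_injective x),
    ← Nat.card_coe_set_eq, SetLike.coe_sort_coe, natCard_eq_pow_finrank (K := ZMod 2),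
    Nat.card_zmod]
  exact (Nat.even_pow' hinf.ne').2 even_two

theorem chi_dotProduct_eq_zero_of_mem_RM [Fintype V] {m : ℕ} (hV : finrank (ZMod 2) V = 2 * m)
    {W : Submodule (ZMod 2) V} {r : ℤ} (hW : r.toNat < finrank (ZMod 2) W)
    {f : V → ZMod 2} (hf : f ∈ RM V m r) : chi (W : Set V) ⬝ᵥ f = 0 := by
  unfold RM at hf
  split_ifs at hf
  · rw [(mem_bot _).1 hf, dotProduct_zero]
  induction hf using Submodule.span_induction with
  | mem f hf =>
    obtain ⟨a, U, hU, rfl⟩ := hf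
    rw [chi_dotProduct_chi, ZMod.natCast_eq_zero_iff_even]
    exact even_ncard_inter_coset (by omega) a
  | zero => exact dotProduct_zero _
  | add f g _ _ hf hg => rw [dotProduct_add, hf, hg, add_zero]
  | smul c f _ hf => rw [dotProduct_smul, hf, smul_zero]

end Parity

namespace Module.Basis

variable {ι K V : Type*} [DivisionRing K] [AddCommGroup V] [Module K V] (b : Basis ι K V)

theorem span_image_inf_span_image (S T : Set ι) :
    span K (b '' S) ⊓ span K (b '' T) = span K (b '' (S ∩ T)) := by
  ext x
  simp only [mem_inf, mem_span_image, Set.subset_inter_iff]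

theorem finrank_span_image (S : Finset ι) : finrank K (span K (b '' S)) = S.card := by
  rw [Set.image_eq_range]
  exact (finrank_span_eq_card (b.linearIndependent.comp _ Subtype.val_injective)).trans
    (Fintype.card_coe S)

end Module.Basis

theorem chi_mem_RM {V : Type*} [AddCommGroup V] [Module (ZMod 2) V] {m r : ℕ}
    (U : Submodule (ZMod 2) V) (hU : finrank (ZMod 2) U = 2 * m - r) :
    chi (U : Set V) ∈ RM V m r := by
  rw [RM, if_neg (by omega)]
  exact subset_span ⟨0, U, by simpa using hU, by simp⟩

theorem exists_mul_notMem_RM {V : Type*} [AddCommGroup V] [Module (ZMod 2) V] [Fintype V]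
    {m r : ℕ} (hV : finrank (ZMod 2) V = 2 * m) (hr : 0 < r) (hrm : r ≤ m) :
    ∃ c ∈ RM V m r, ∃ d ∈ RM V m r, ∀ s : ℤ, s < 2 * r → c * d ∉ RM V m s := by
  let b := finBasisOfFinrankEq (ZMod 2) V hV
  let P (T : Finset (Fin (2 * m))) : Submodule (ZMod 2) V := span (ZMod 2) (b '' T)
  have hP (T T' : Finset (Fin (2 * m))) : (P T : Set V) ∩ P T' = P (T ∩ T') := by
    rw [← coe_inf, b.span_image_inf_span_image, ← Finset.coe_inter]
  have hmem (T : Finset (Fin (2 * m))) (hT : T.card = r) : chi (P Tᶜ : Set V) ∈ RM V m r :=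
    chi_mem_RM _ (by rw [b.finrank_span_image, Finset.card_compl, Fintype.card_fin, hT])
  obtain ⟨S, -, hS⟩ := Finset.exists_subset_card_eq
    (s := (Finset.univ : Finset (Fin (2 * m)))) (n := 2 * r) (by simp; omega)
  obtain ⟨A, hAS, hA⟩ := Finset.exists_subset_card_eq (s := S) (n := r) (by omega)
  -- `P S` plays the role of `W`: it has dimension `2r` and meets `P Aᶜ ∩ P (S \ A)ᶜ = P Sᶜ` in `0`.
  refine ⟨_, hmem A hA, _, hmem (S \ A) (by rw [Finset.card_sdiff_of_subset hAS]; omega),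
    fun s hs h => ?_⟩
  rw [chi_mul_chi, hP, ← Finset.compl_union, Finset.union_sdiff_of_subset hAS] at h
  have hW : finrank (ZMod 2) (P S) = 2 * r := by rw [b.finrank_span_image, hS]
  have h0 := chi_dotProduct_eq_zero_of_mem_RM hV (by rw [hW]; omega) h
  rw [chi_dotProduct_chi, hP, Finset.inter_compl] at h0
  simp [P] at h0

theorem stmt10_general (m : ℕ) (V : Type*) [AddCommGroup V] [Module (ZMod 2) V]
    (b : Module.Basis (Fin (2 * m)) (ZMod 2) V) :
    (3 ≤ m → ∃ c ∈ RM V m 3, ∃ d ∈ RM V m 3, c * d ∉ RM V m 5) ∧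
    (4 ≤ m → ∃ c ∈ RM V m 4, ∃ d ∈ RM V m 4, c * d ∉ RM V m 6) ∧
    (4 ≤ m → ¬ SchurClosed (fun i => RM V m (2 * (i : ℤ))) m ∧
      ¬ SchurClosed (fun i => RM V m (2 * (i : ℤ) + 1)) m) := by
  have : Fintype V := Module.fintypeOfFintype b
  have hV : finrank (ZMod 2) V = 2 * m := by rw [finrank_eq_card_basis b, Fintype.card_fin]
  have h3 (hm : 3 ≤ m) : ∃ c ∈ RM V m 3, ∃ d ∈ RM V m 3, c * d ∉ RM V m 5 :=
    have ⟨c, hc, d, hd, hcd⟩ := exists_mul_notMem_RM hV (r := 3) (by norm_num) hm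
    ⟨c, hc, d, hd, hcd 5 (by norm_num)⟩
  have h4 (hm : 4 ≤ m) : ∃ c ∈ RM V m 4, ∃ d ∈ RM V m 4, c * d ∉ RM V m 6 :=
    have ⟨c, hc, d, hd, hcd⟩ := exists_mul_notMem_RM hV (r := 4) (by norm_num) hm
    ⟨c, hc, d, hd, hcd 6 (by norm_num)⟩
  refine ⟨h3, h4, fun hm => ⟨fun hclosed => ?_, fun hclosed => ?_⟩⟩
  · obtain ⟨c, hc, d, hd, hcd⟩ := h4 hm
    exact hcd (hclosed 2 (by omega) c hc d hd)
  · obtain ⟨c, hc, d, hd, hcd⟩ := h3 (by omega)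
    exact hcd (hclosed 1 (by omega) c hc d hd)

/-- If `m ≥ 3` then there are `c, d ∈ R(3,2m)` with `c*d ∉ R(5,2m)`; if
`m ≥ 4` then there are `c, d ∈ R(4,2m)` with `c*d ∉ R(6,2m)`. In particular, for `m ≥ 4`
neither the chain `R(0,2m) ⊆ R(2,2m) ⊆ … ⊆ R(2m-2,2m)` nor the chain
`R(1,2m) ⊆ R(3,2m) ⊆ … ⊆ R(2m-1,2m)` is closed under the Schur product. -/
theorem stmt10 (m : ℕ) (hm : 1 ≤ m) (V : Type*) [AddCommGroup V] [Module (ZMod 2) V]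
    (b : Module.Basis (Fin (2 * m)) (ZMod 2) V) :
    (3 ≤ m → ∃ c ∈ RM V m 3, ∃ d ∈ RM V m 3, c * d ∉ RM V m 5) ∧
    (4 ≤ m → ∃ c ∈ RM V m 4, ∃ d ∈ RM V m 4, c * d ∉ RM V m 6) ∧
    (4 ≤ m → ¬ SchurClosed (fun i => RM V m (2 * (i : ℤ))) m ∧
      ¬ SchurClosed (fun i => RM V m (2 * (i : ℤ) + 1)) m) :=
  stmt10_general m V b
end

section
/- Let m ≥ 1. With respect to the inner product ⟨x,y⟩ := 2^{−m} Σ_{v∈V} x_v y_v on ℝ^V, the dual lattice of the Barnes-Wall lattice BW equals BW', i.e. {x ∈ ℝ^V : ⟨x,y⟩ ∈ ℤ for all y ∈ BW} = BW'. -/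
open Classical in
/-- The Barnes-Wall lattice `BW_{2m}`, the `ℤ`-span of the vectors
`2^{⌊(2m-r+1)/2⌋} Σ_{v∈U} e_v` for `U ∈ T_r`, `0 ≤ r ≤ 2m`. -/
noncomputable def BWlat {V : Type*} [AddCommGroup V] [Module (ZMod 2) V] {m : ℕ}
    (b : Module.Basis (Fin (2 * m)) (ZMod 2) V) : Submodule ℤ (V → ℝ) :=
  Submodule.span ℤ
    {x | ∃ r ≤ 2 * m, ∃ U ∈ Tfam b r,
      x = fun v => if v ∈ U then (2 : ℝ) ^ ((2 * m - r + 1) / 2) else 0}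

open Classical in
/-- The lattice `BW' = BW_{2m}^#`, the `ℤ`-span of the vectors
`2^{⌊(2m-r)/2⌋} Σ_{v∈U} e_v` for `U ∈ T_r`, `0 ≤ r ≤ 2m`. -/
noncomputable def BWdual {V : Type*} [AddCommGroup V] [Module (ZMod 2) V] {m : ℕ}
    (b : Module.Basis (Fin (2 * m)) (ZMod 2) V) : Submodule ℤ (V → ℝ) :=
  Submodule.span ℤ
    {x | ∃ r ≤ 2 * m, ∃ U ∈ Tfam b r,
      x = fun v => if v ∈ U then (2 : ℝ) ^ ((2 * m - r) / 2) else 0}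

open Finset
open LinearMap (BilinForm)

noncomputable section

namespace BarnesWall

section Dual

variable {ι κ : Type*} [Fintype ι] [Fintype κ]

abbrev dualLattice (L : Submodule ℤ (ι → ℝ)) : Submodule ℤ (ι → ℝ) :=
  BilinForm.dualSubmodule (dotProductBilin ℝ ℝ) L

lemma mem_dualLattice {L : Submodule ℤ (ι → ℝ)} {x : ι → ℝ} :
    x ∈ dualLattice L ↔ ∀ y ∈ L, x ⬝ᵥ y ∈ (1 : Submodule ℤ ℝ) := Iff.rfl

lemma dualLattice_map_funCongrLeft (e : κ ≃ ι) (L : Submodule ℤ (ι → ℝ)) :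
    dualLattice (L.map (LinearEquiv.funCongrLeft ℤ ℝ e : (ι → ℝ) →ₗ[ℤ] κ → ℝ)) =
      (dualLattice L).map (LinearEquiv.funCongrLeft ℤ ℝ e : (ι → ℝ) →ₗ[ℤ] κ → ℝ) := by
  ext x
  set Φ := LinearEquiv.funCongrLeft ℤ ℝ e
  have hΦ (y : ι → ℝ) : Φ.symm x ⬝ᵥ y = x ⬝ᵥ Φ y := by
    rw [dotProduct_comm x, dotProduct_comm]
    exact dotProduct_comp_equiv_symm y x e
  rw [Submodule.mem_map_equiv, mem_dualLattice, mem_dualLattice]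
  constructor
  · intro h y hy
    exact hΦ y ▸ h (Φ y) (Submodule.mem_map_of_mem hy)
  · rintro h _ ⟨y, hy, rfl⟩
    exact hΦ y ▸ h y hy

lemma mem_dualLattice_span {s : Set (ι → ℝ)} {x : ι → ℝ} :
    x ∈ dualLattice (Submodule.span ℤ s) ↔ ∀ y ∈ s, x ⬝ᵥ y ∈ (1 : Submodule ℤ ℝ) :=
  Submodule.span_le (p := (1 : Submodule ℤ ℝ).comap ((dotProductBilin ℝ ℝ x).restrictScalars ℤ))

end Dual

lemma mem_and_add_mem_iff {M : Type*} [AddCommGroup M] {A B : Submodule ℤ M} (hBA : B ≤ A)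
    (h2A : ∀ a ∈ A, (2 : ℤ) • a ∈ B) {p q : M} : p ∈ A ∧ p + q ∈ B ↔ q ∈ A ∧ p - q ∈ B := by
  constructor
  · rintro ⟨hp, hpq⟩
    refine ⟨by simpa using sub_mem (hBA hpq) hp, ?_⟩
    simpa [two_zsmul] using sub_mem (h2A p hp) hpq
  · rintro ⟨hq, hpq⟩
    refine ⟨by simpa using add_mem (hBA hpq) hq, ?_⟩
    simpa [two_zsmul, ← add_assoc] using add_mem hpq (h2A q hq)

abbrev Cube (n : ℕ) := Fin n → ZMod 2

variable {n : ℕ}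

-- `/` rounds down, also when `t - #S` is negative.
def gen (t : ℤ) (S : Finset (Fin n)) : Cube n → ℝ := fun v =>
  if ∀ i ∉ S, v i = 0 then 2 ^ ((t - #S) / 2) else 0

variable (n) in
def lattice (t : ℤ) : Submodule ℤ (Cube n → ℝ) := Submodule.span ℤ (Set.range (gen t))

lemma gen_add_two_mul (t : ℤ) (k : ℕ) (S : Finset (Fin n)) :
    gen (t + 2 * k) S = (2 : ℝ) ^ k • gen t S := by
  ext v
  simp only [gen, Pi.smul_apply, smul_eq_mul, mul_ite, mul_zero]
  rw [← zpow_natCast, ← zpow_add₀ two_ne_zero]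
  congr 3
  omega

lemma lattice_add_two_mul (t : ℤ) (k : ℕ) :
    lattice n (t + 2 * k) = (lattice n t).map (DistribSMul.toLinearMap ℤ _ ((2 : ℝ) ^ k)) := by
  rw [lattice, lattice, Submodule.map_span, ← Set.range_comp]
  congr 2
  ext1 S
  exact gen_add_two_mul t k S

lemma pow_smul_mem_lattice_iff (k : ℕ) {t : ℤ} {x : Cube n → ℝ} :
    (2 : ℝ) ^ k • x ∈ lattice n (t + 2 * k) ↔ x ∈ lattice n t := by
  rw [lattice_add_two_mul, Submodule.mem_map]
  refine ⟨fun ⟨y, hy, hxy⟩ => ?_, fun hx => ⟨x, hx, rfl⟩⟩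
  rwa [← smul_right_injective _ (pow_ne_zero k two_ne_zero) hxy]

lemma lattice_succ_le (t : ℤ) : lattice n (t + 1) ≤ lattice n t := by
  rw [lattice, Submodule.span_le]
  rintro _ ⟨S, rfl⟩
  have hS : gen (t + 1) S = ((2 : ℤ) ^ ((t + 1 - #S) / 2 - (t - #S) / 2).toNat) • gen t S := by
    ext v
    simp only [gen, Pi.smul_apply, zsmul_eq_mul, mul_ite, mul_zero]
    push_cast
    rw [← zpow_natCast, ← zpow_add₀ two_ne_zero]
    congr 3
    omega
  rw [hS]
  exact Submodule.smul_mem _ _ (Submodule.subset_span ⟨S, rfl⟩)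

lemma two_smul_mem_lattice_succ {t : ℤ} {x : Cube n → ℝ} (hx : x ∈ lattice n t) :
    (2 : ℤ) • x ∈ lattice n (t + 1) := by
  have := (pow_smul_mem_lattice_iff 1).2 hx
  rw [pow_one, Nat.cast_one, mul_one] at this
  rw [two_zsmul, ← two_smul ℝ]
  exact lattice_succ_le _ (by simpa [add_assoc] using this)

lemma _root_.ZMod.eq_zero_or_eq_one (z : ZMod 2) : z = 0 ∨ z = 1 := by decide +revert

def glue : ((Cube n → ℝ) × (Cube n → ℝ)) ≃ₗ[ℝ] (Cube (n + 1) → ℝ) where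
  toFun p v := if v 0 = 0 then p.1 (Fin.tail v) else p.2 (Fin.tail v)
  invFun x := (fun w => x (Fin.cons 0 w), fun w => x (Fin.cons 1 w))
  map_add' p q := by ext v; by_cases h : v 0 = 0 <;> simp [h]
  map_smul' c p := by ext v; by_cases h : v 0 = 0 <;> simp [h]
  left_inv p := by simp
  right_inv x := by
    ext v
    induction v using Fin.consCases with
    | cons z w => obtain rfl | rfl := ZMod.eq_zero_or_eq_one z <;> simp

@[simp]
lemma glue_apply_cons (p : (Cube n → ℝ) × (Cube n → ℝ)) (z : ZMod 2) (w : Cube n) :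
    glue p (Fin.cons z w) = if z = 0 then p.1 w else p.2 w := by
  simp [glue]

lemma dotProduct_glue (p q : (Cube n → ℝ) × (Cube n → ℝ)) :
    glue p ⬝ᵥ glue q = p.1 ⬝ᵥ q.1 + p.2 ⬝ᵥ q.2 := by
  simp only [dotProduct]
  rw [← (Fin.consEquiv fun _ => ZMod 2).sum_comp, Fintype.sum_prod_type,
    show (univ : Finset (ZMod 2)) = {0, 1} from rfl, sum_pair zero_ne_one]
  simp [Fin.consEquiv]

def shear : ((Cube n → ℝ) × (Cube n → ℝ)) →ₗ[ℤ] (Cube (n + 1) → ℝ) :=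
  (glue.toLinearMap ∘ₗ
    (LinearMap.fst ℝ _ _ + LinearMap.snd ℝ _ _).prod (LinearMap.snd ℝ _ _)).restrictScalars ℤ

@[simp]
lemma shear_apply (a c : Cube n → ℝ) : shear (a, c) = glue (a + c, c) := rfl

lemma glue_gen_zero (t : ℤ) (S : Finset (Fin n)) :
    glue (gen t S, 0) = gen t (S.map (Fin.succEmb n)) := by
  ext v
  induction v using Fin.consCases with
  | cons z w =>
    obtain rfl | rfl := ZMod.eq_zero_or_eq_one z <;> simp [gen, Fin.forall_fin_succ]

lemma glue_gen_gen (t : ℤ) (S : Finset (Fin n)) :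
    glue (gen (t - 1) S, gen (t - 1) S) = gen t (insert 0 (S.map (Fin.succEmb n))) := by
  ext v
  induction v using Fin.consCases with
  | cons z w =>
    obtain rfl | rfl := ZMod.eq_zero_or_eq_one z <;>
      simp [gen, Fin.forall_fin_succ, sub_add_eq_sub_sub_swap]

lemma _root_.Finset.exists_eq_map_succEmb (S : Finset (Fin (n + 1))) :
    ∃ S' : Finset (Fin n),
      S = S'.map (Fin.succEmb n) ∨ S = insert 0 (S'.map (Fin.succEmb n)) := by
  refine ⟨S.preimage Fin.succ (Fin.succ_injective n).injOn, ?_⟩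
  by_cases h0 : 0 ∈ S
  · right
    ext i
    induction i using Fin.cases <;> simp [h0]
  · left
    ext i
    induction i using Fin.cases <;> simp [h0]

lemma range_gen_succ (t : ℤ) :
    Set.range (gen (n := n + 1) t) = shear '' (LinearMap.inl ℤ _ _ '' Set.range (gen t) ∪
      LinearMap.inr ℤ _ _ '' Set.range (gen (t - 1))) := by
  simp only [Set.image_union, ← Set.range_comp]
  ext x
  constructor
  · rintro ⟨S, rfl⟩
    obtain ⟨S', rfl | rfl⟩ := Finset.exists_eq_map_succEmb S
    · exact .inl ⟨S', by simp [glue_gen_zero]⟩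
    · exact .inr ⟨S', by simp [glue_gen_gen]⟩
  · rintro (⟨S', rfl⟩ | ⟨S', rfl⟩)
    · exact ⟨S'.map (Fin.succEmb n), by simp [glue_gen_zero]⟩
    · exact ⟨insert 0 (S'.map (Fin.succEmb n)), by simp [glue_gen_gen]⟩

lemma lattice_succ (t : ℤ) :
    lattice (n + 1) t = ((lattice n t).prod (lattice n (t - 1))).map shear := by
  rw [lattice, range_gen_succ, ← Submodule.map_span, LinearMap.span_inl_union_inr]
  rfl

lemma glue_mem_lattice_succ_iff {t : ℤ} {p q : Cube n → ℝ} :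
    glue (p, q) ∈ lattice (n + 1) t ↔ q ∈ lattice n (t - 1) ∧ p - q ∈ lattice n t := by
  rw [lattice_succ]
  constructor
  · rintro ⟨⟨a, c⟩, ⟨ha, hc⟩, h⟩
    obtain ⟨rfl, rfl⟩ := Prod.ext_iff.1 (glue.injective h)
    simpa using ⟨hc, ha⟩
  · rintro ⟨hq, hpq⟩
    exact ⟨(p - q, q), ⟨hpq, hq⟩, by simp⟩

lemma glue_mem_dualLattice_succ_iff {t : ℤ} {p q : Cube n → ℝ} :
    glue (p, q) ∈ dualLattice (lattice (n + 1) t) ↔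
      p ∈ dualLattice (lattice n t) ∧ p + q ∈ dualLattice (lattice n (t - 1)) := by
  have key (a c : Cube n → ℝ) : glue (p, q) ⬝ᵥ shear (a, c) = p ⬝ᵥ a + (p + q) ⬝ᵥ c := by
    rw [shear_apply, dotProduct_glue, dotProduct_add, add_dotProduct]; ring
  simp only [lattice_succ, mem_dualLattice, Submodule.mem_map, Submodule.mem_prod]
  constructor
  · intro h
    refine ⟨fun a ha => ?_, fun c hc => ?_⟩
    · have := h (shear (a, 0)) ⟨(a, 0), ⟨ha, zero_mem _⟩, rfl⟩
      rwa [key, dotProduct_zero, add_zero] at this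
    · have := h (shear (0, c)) ⟨(0, c), ⟨zero_mem _, hc⟩, rfl⟩
      rwa [key, dotProduct_zero, zero_add] at this
  · rintro ⟨hp, hpq⟩ _ ⟨⟨a, c⟩, ⟨ha, hc⟩, rfl⟩
    rw [key]
    exact add_mem (hp a ha) (hpq c hc)

lemma lattice_zero (t : ℤ) : lattice 0 t = Submodule.span ℤ {fun _ => (2 : ℝ) ^ (t / 2)} := by
  have hgen : gen (n := 0) t = fun _ _ => (2 : ℝ) ^ (t / 2) := by
    ext S v
    simp [gen, Subsingleton.elim S ∅]
  rw [lattice, hgen, Set.range_const]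

lemma dualLattice_lattice_zero (t : ℤ) : dualLattice (lattice 0 t) = lattice 0 (1 - t) := by
  have hexp : (1 - t) / 2 = -(t / 2) := by omega
  ext x
  simp only [lattice_zero, mem_dualLattice_span, Set.mem_singleton_iff, forall_eq]
  simp only [Submodule.mem_one, Submodule.mem_span_singleton, dotProduct, Fintype.sum_unique,
    funext_iff, Pi.smul_apply, Unique.forall_iff, algebraMap_int_eq, eq_intCast]
  simp only [hexp, zpow_neg, zsmul_eq_mul]
  refine exists_congr fun k => ?_
  rw [mul_inv_eq_iff_eq_mul₀ (by positivity), eq_comm]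

theorem dualLattice_lattice (n : ℕ) (t : ℤ) :
    dualLattice (lattice n t) = lattice n (n + 1 - t) := by
  induction n generalizing t with
  | zero => simpa using dualLattice_lattice_zero t
  | succ n ih =>
    ext x
    obtain ⟨⟨p, q⟩, rfl⟩ := glue.surjective x
    rw [glue_mem_dualLattice_succ_iff, ih, ih, glue_mem_lattice_succ_iff]
    convert mem_and_add_mem_iff (lattice_succ_le (n + 1 - t))
      (fun a ha => two_smul_mem_lattice_succ ha) using 4 <;> omega

lemma _root_.Module.Basis.mem_span_image_iff_repr_eq_zero {ι R M : Type*} [Semiring R]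
    [AddCommMonoid M] [Module R M] (b : Module.Basis ι R M) {s : Set ι} {x : M} :
    x ∈ Submodule.span R (b '' s) ↔ ∀ i ∉ s, b.repr x i = 0 :=
  b.mem_span_image.trans Finsupp.support_subset_iff

section Coordinates

variable {m : ℕ} {V : Type*} [AddCommGroup V] [Module (ZMod 2) V]
  (b : Module.Basis (Fin (2 * m)) (ZMod 2) V)

abbrev pullback : (Cube (2 * m) → ℝ) ≃ₗ[ℤ] (V → ℝ) :=
  LinearEquiv.funCongrLeft ℤ ℝ b.equivFun.toEquiv

open Classical in
lemma span_Tfam_eq_map (t : ℤ) (E : ℕ → ℕ) (hE : ∀ r ≤ 2 * m, (E r : ℤ) = (t - r) / 2) :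
    Submodule.span ℤ
      {x | ∃ r ≤ 2 * m, ∃ U ∈ Tfam b r, x = fun v => if v ∈ U then (2 : ℝ) ^ E r else 0} =
      (lattice (2 * m) t).map (pullback b : (Cube (2 * m) → ℝ) →ₗ[ℤ] (V → ℝ)) := by
  have hgen (S : Finset (Fin (2 * m))) : pullback b (gen t S) =
      fun v => if v ∈ Submodule.span (ZMod 2) (b '' S) then (2 : ℝ) ^ E #S else 0 := by
    ext v
    rw [← zpow_natCast, hE #S (card_le_univ S |>.trans_eq (by simp))]
    simp only [gen, LinearEquiv.funCongrLeft_apply, LinearMap.funLeft_apply,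
      b.mem_span_image_iff_repr_eq_zero]
    congr
  rw [lattice, Submodule.map_span, ← Set.range_comp]
  congr 1
  ext x
  constructor
  · rintro ⟨r, -, _, ⟨S, rfl, rfl⟩, rfl⟩
    exact ⟨S, hgen S⟩
  · rintro ⟨S, rfl⟩
    exact ⟨#S, card_le_univ S |>.trans_eq (by simp), _, ⟨S, rfl, rfl⟩, hgen S⟩

lemma BWlat_eq_map :
    BWlat b = (lattice (2 * m) (2 * m + 1)).map (pullback b : (Cube (2 * m) → ℝ) →ₗ[ℤ] (V → ℝ)) :=
  span_Tfam_eq_map b _ (fun r => (2 * m - r + 1) / 2) (by omega)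

lemma BWdual_eq_map :
    BWdual b = (lattice (2 * m) (2 * m)).map (pullback b : (Cube (2 * m) → ℝ) →ₗ[ℤ] (V → ℝ)) :=
  span_Tfam_eq_map b _ (fun r => (2 * m - r) / 2) (by omega)

end Coordinates

end BarnesWall

end

open BarnesWall

theorem stmt15_general (m : ℕ) (V : Type*) [AddCommGroup V] [Module (ZMod 2) V]
    [Fintype V] (b : Module.Basis (Fin (2 * m)) (ZMod 2) V) :
    {x : V → ℝ | ∀ y ∈ BWlat b, ∃ k : ℤ, ((2 : ℝ) ^ m)⁻¹ * ∑ v, x v * y v = (k : ℝ)}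
      = (BWdual b : Set (V → ℝ)) := by
  have hdual : dualLattice (BWlat b) = (lattice (2 * m) 0).map (pullback b : _ →ₗ[ℤ] _) := by
    rw [BWlat_eq_map, dualLattice_map_funCongrLeft, dualLattice_lattice]
    congr 2
    push_cast
    ring
  ext x
  calc (∀ y ∈ BWlat b, ∃ k : ℤ, ((2 : ℝ) ^ m)⁻¹ * ∑ v, x v * y v = k)
      ↔ ((2 : ℝ) ^ m)⁻¹ • x ∈ dualLattice (BWlat b) := by
        simp only [mem_dualLattice, smul_dotProduct, smul_eq_mul, Submodule.mem_one,
          algebraMap_int_eq, eq_intCast]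
        exact forall₂_congr fun y _ => exists_congr fun k => eq_comm
    _ ↔ (2 : ℝ) ^ m • ((2 : ℝ) ^ m)⁻¹ • (pullback b).symm x ∈ lattice (2 * m) (0 + 2 * m) := by
        rw [hdual, Submodule.mem_map_equiv, pow_smul_mem_lattice_iff]
        rfl
    _ ↔ x ∈ BWdual b := by
        rw [smul_inv_smul₀ (by positivity), BWdual_eq_map, Submodule.mem_map_equiv, zero_add]

/-- With respect to the inner product `⟨x,y⟩ = 2^{-m} Σ_{v∈V} x_v y_v` on
`ℝ^V`, the dual lattice of the Barnes-Wall lattice `BW` equals `BW'`. -/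
theorem stmt15 (m : ℕ) (hm : 1 ≤ m) (V : Type*) [AddCommGroup V] [Module (ZMod 2) V]
    [Fintype V] (b : Module.Basis (Fin (2 * m)) (ZMod 2) V) :
    {x : V → ℝ | ∀ y ∈ BWlat b, ∃ k : ℤ, ((2 : ℝ) ^ m)⁻¹ * ∑ v, x v * y v = (k : ℝ)}
      = (BWdual b : Set (V → ℝ)) :=
  stmt15_general m V b
end

section
/- Let m ≥ 1, 0 ≤ r < 2m and I ⊆ M_r. Then dim_{𝔽₂} C(r,I,2m) = Σ_{ℓ=0}^{r−1} binom(2m,ℓ) + Σ_{k∈I} |Θ^{(r)}_k|. -/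
/-- `Z_r = {ζ^u : 0 < u ≤ 4^m - 1, wt₂(u) ≤ 2m - 1 - r}` (for `r ∈ ℤ`, `r ≥ -1`). -/
def Zset {K : Type*} [Monoid K] (m : ℕ) (ζ : K) (r : ℤ) : Set K :=
  {z | ∃ u : ℕ, 0 < u ∧ u ≤ 4 ^ m - 1 ∧ (wt2 m u : ℤ) ≤ 2 * m - 1 - r ∧ z = ζ ^ u}

/-- `Z_{r,I} = Z_{r-1} \ ∪_{k∈I} Θ^{(r)}_k`. -/
def ZrI {K : Type*} [Monoid K] (m : ℕ) (ζ : K) (r : ℕ) (I : Set ℕ) : Set K :=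
  Zset m ζ ((r : ℤ) - 1) \ ⋃ k ∈ I, (ThetaR m ζ r ∩ ThetaK m ζ k)

/-- `M_r`: equal to `M₊ = {0 ≤ k ≤ m : m-k even}` for `r` even and to
`M₋ = {0 ≤ k ≤ m : m-k odd}` for `r` odd. -/
def Mset (m r : ℕ) : Set ℕ := {k | k ≤ m ∧ (Even (m - k) ↔ Even r)}

/-- `M₋ = {0 ≤ k ≤ m : m-k odd}`. -/
def Mminus (m : ℕ) : Set ℕ := {k | k ≤ m ∧ Odd (m - k)}

/-- The cyclic code `C(r,I,2m)* ≤ 𝔽₂^{4^m-1}` with zero set `Z_{r,I}`. -/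
def CstarCode {K : Type*} [CommRing K] [Algebra (ZMod 2) K] (m : ℕ) (ζ : K) (r : ℕ)
    (I : Set ℕ) : Submodule (ZMod 2) (Fin (4 ^ m - 1) → ZMod 2) where
  carrier := {c | ∀ z ∈ ZrI m ζ r I, ∑ i, algebraMap (ZMod 2) K (c i) * z ^ (i : ℕ) = 0}
  zero_mem' := by intro z hz; simp
  add_mem' := by
    intro a b ha hb z hz
    have h1 := ha z hz
    have h2 := hb z hz
    calc ∑ i, algebraMap (ZMod 2) K ((a + b) i) * z ^ (i : ℕ)
        = ∑ i, (algebraMap (ZMod 2) K (a i) * z ^ (i : ℕ)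
            + algebraMap (ZMod 2) K (b i) * z ^ (i : ℕ)) := by
          refine Finset.sum_congr rfl fun i _ => ?_
          rw [Pi.add_apply, map_add, add_mul]
      _ = 0 := by rw [Finset.sum_add_distrib, h1, h2, add_zero]
  smul_mem' := by
    intro c a ha z hz
    have h1 := ha z hz
    calc ∑ i, algebraMap (ZMod 2) K ((c • a) i) * z ^ (i : ℕ)
        = algebraMap (ZMod 2) K c
            * ∑ i, algebraMap (ZMod 2) K (a i) * z ^ (i : ℕ) := by
          rw [Finset.mul_sum]
          refine Finset.sum_congr rfl fun i _ => ?_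
          rw [Pi.smul_apply, smul_eq_mul, map_mul, mul_assoc]
      _ = 0 := by rw [h1, mul_zero]

/-- The extended code `C(r,I,2m) ≤ 𝔽₂^{4^m}` of `C(r,I,2m)*`, obtained by appending to each
codeword the coordinate `Σ_i c_i`. -/
def CextCode {K : Type*} [CommRing K] [Algebra (ZMod 2) K] (m : ℕ) (ζ : K) (r : ℕ)
    (I : Set ℕ) : Submodule (ZMod 2) (Fin (4 ^ m - 1 + 1) → ZMod 2) where
  carrier := {d | Fin.init d ∈ CstarCode m ζ r I ∧ d (Fin.last _) = ∑ i, Fin.init d i}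
  zero_mem' := by
    refine ⟨(CstarCode m ζ r I).zero_mem, by simp [Fin.init]⟩
  add_mem' := by
    intro a b ha hb
    refine ⟨add_mem ha.1 hb.1, ?_⟩
    show (a + b) (Fin.last _) = _
    rw [Pi.add_apply, ha.2, hb.2, ← Finset.sum_add_distrib]
    rfl
  smul_mem' := by
    intro c a ha
    refine ⟨Submodule.smul_mem _ c ha.1, ?_⟩
    show (c • a) (Fin.last _) = _
    rw [Pi.smul_apply, ha.2, Finset.smul_sum]
    rfl

/-- The Hamming weight of a vector. -/
def hwt {n : ℕ} {R : Type*} [Zero R] [DecidableEq R] (c : Fin n → R) : ℕ :=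
  (Finset.univ.filter fun i => c i ≠ 0).card


/-!
For `u ∈ [1, 4^m - 1]`, `ζ^(2u) = ζ^u'` where `u'` is `u` with its `2m` binary digits rotated
cyclically by one place. The rotation preserves `wt₂` and swaps `O` and `E`, so the zero set
`Z_{r,I} = {ζ^u : u ∈ U}` is closed under the Frobenius `z ↦ z²`. Hence `∏_{z ∈ Z_{r,I}} (X - z)`
has coefficients in `𝔽₂`, `C(r,I,2m)*` consists of the words whose polynomial it divides, and
`dim C(r,I,2m)* = (4^m - 1) - |U|`; appending the parity coordinate does not change the dimension.
Finally `U` is the set of exponents of weight `≤ 2m - r` minus the disjoint layers `Θ^{(r)}_k`, and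
the exponents of weight `> 2m - r` number `Σ_{ℓ<r} binom(2m, ℓ)` by the symmetry of binomials.
-/

open Finset Polynomial Module

namespace Nat

lemma filter_range_testBit_eq_toFinset_bitIndices {u w : ℕ} (hu : u < 2 ^ w) :
    (range w).filter (fun i => u.testBit i) = u.bitIndices.toFinset := by
  ext i
  simp only [mem_filter, mem_range, List.mem_toFinset, mem_bitIndices, and_iff_right_iff_imp]
  exact fun h => (Nat.pow_lt_pow_iff_right (by norm_num)).1 ((ge_two_pow_of_testBit h).trans_lt hu)

lemma card_filter_card_testBit_eq_choose (w c : ℕ) :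
    #{u ∈ range (2 ^ w) | #((range w).filter fun i => u.testBit i) = c} = w.choose c := by
  rw [show w.choose c = #(powersetCard c (range w)) by simp]
  refine card_nbij' (fun u => u.bitIndices.toFinset) (fun s => ∑ i ∈ s, 2 ^ i) ?_ ?_
    (fun u _ => sum_toFinset_bitIndices_two_pow u) (fun s _ => toFinset_bitIndices_sum_two_pow s)
  · intro u hu
    simp only [coe_filter, mem_range, Set.mem_ofPred_eq] at hu
    simp only [mem_coe, mem_powersetCard, ← filter_range_testBit_eq_toFinset_bitIndices hu.1]
    exact ⟨filter_subset _ _, hu.2⟩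
  · intro s hs
    obtain ⟨hsw, rfl⟩ := mem_powersetCard.1 hs
    have hlt : ∑ i ∈ s, 2 ^ i < 2 ^ w := Nat.geomSum_lt le_rfl fun i hi => mem_range.1 (hsw hi)
    simp [hlt, filter_range_testBit_eq_toFinset_bitIndices hlt]

end Nat

-- For `u < 2^(n+1)` this rotates the `n + 1` binary digits of `u` by one place; it is `2u` reduced
-- modulo `2^(n+1) - 1`.
def rotateLeft (n u : ℕ) : ℕ := 2 * (u % 2 ^ n) + u / 2 ^ n

section rotateLeft

variable {n u : ℕ}

lemma div_two_pow_lt_two (hu : u < 2 ^ (n + 1)) : u / 2 ^ n < 2 := by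
  rw [Nat.div_lt_iff_lt_mul (by positivity)]
  rwa [pow_succ, mul_comm] at hu

lemma two_mul_eq_rotateLeft_add (hu : u < 2 ^ (n + 1)) :
    2 * u = rotateLeft n u + (2 ^ (n + 1) - 1) * (u / 2 ^ n) := by
  have hq := div_two_pow_lt_two hu
  have hdiv := Nat.div_add_mod u (2 ^ n)
  rw [pow_succ]
  unfold rotateLeft
  interval_cases u / 2 ^ n <;> omega

lemma rotateLeft_lt (hu : u < 2 ^ (n + 1)) : rotateLeft n u < 2 ^ (n + 1) := by
  have hq := div_two_pow_lt_two hu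
  have hr := Nat.mod_lt u (show 0 < 2 ^ n by positivity)
  unfold rotateLeft
  rw [pow_succ]
  omega

lemma rotateLeft_pos (hu : u < 2 ^ (n + 1)) (hu0 : 0 < u) : 0 < rotateLeft n u := by
  have hq := div_two_pow_lt_two hu
  have hdiv := Nat.div_add_mod u (2 ^ n)
  unfold rotateLeft
  interval_cases u / 2 ^ n <;> omega

lemma testBit_rotateLeft_zero (hu : u < 2 ^ (n + 1)) :
    (rotateLeft n u).testBit 0 = u.testBit n := by
  rw [rotateLeft, ← pow_one 2, Nat.testBit_two_pow_mul_add _ (by simpa using div_two_pow_lt_two hu)]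
  simpa using Nat.testBit_eq_decide_div_mod_eq.symm

lemma testBit_rotateLeft_succ {j : ℕ} (hu : u < 2 ^ (n + 1)) (hj : j < n) :
    (rotateLeft n u).testBit (j + 1) = u.testBit j := by
  rw [rotateLeft, ← pow_one 2, Nat.testBit_two_pow_mul_add _ (by simpa using div_two_pow_lt_two hu)]
  simp [Nat.testBit_mod_two_pow, hj]

lemma card_filter_testBit_rotateLeft (hu : u < 2 ^ (n + 1)) :
    #{i ∈ range (n + 1) | (rotateLeft n u).testBit i} = #{i ∈ range (n + 1) | u.testBit i} := by
  simp only [card_filter]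
  rw [sum_range_succ', sum_range_succ, testBit_rotateLeft_zero hu]
  congr 1
  exact sum_congr rfl fun i hi => by rw [testBit_rotateLeft_succ hu (mem_range.1 hi)]

lemma pow_rotateLeft {M : Type*} [Monoid M] {ζ : M} (hζ : ζ ^ (2 ^ (n + 1) - 1) = 1)
    (hu : u < 2 ^ (n + 1)) : ζ ^ rotateLeft n u = (ζ ^ u) ^ 2 := by
  rw [← pow_mul, mul_comm, two_mul_eq_rotateLeft_add hu, pow_add, pow_mul, hζ, one_pow, mul_one]

end rotateLeft

lemma IsPrimitiveRoot.injOn_pow_Icc {M : Type*} [CommMonoid M] {ζ : M} {k : ℕ}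
    (hζ : IsPrimitiveRoot ζ k) : Set.InjOn (ζ ^ ·) ↑(Icc 1 k) := by
  intro a ha b hb h
  simp only [coe_Icc, Set.mem_Icc] at ha hb
  have hmod : a ≡ b [MOD k] := hζ.eq_orderOf ▸ (hζ.isOfFinOrder (by omega)).pow_inj_mod.1 h
  have hpred : a - 1 ≡ b - 1 [MOD k] :=
    Nat.ModEq.add_right_cancel' 1 (by rwa [Nat.sub_add_cancel ha.1, Nat.sub_add_cancel hb.1])
  have := hpred.eq_of_lt_of_lt (by omega) (by omega)
  omega

namespace Polynomial

lemma prod_X_sub_C_dvd_iff {K : Type*} [Field K] (Z : Finset K) (p : K[X]) :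
    ∏ z ∈ Z, (X - C z) ∣ p ↔ ∀ z ∈ Z, p.IsRoot z := by
  simp_rw [← dvd_iff_isRoot]
  refine ⟨fun h z hz => (Finset.dvd_prod_of_mem (fun z => X - C z) hz).trans h, fun h => ?_⟩
  refine Finset.prod_dvd_of_coprime (fun a _ b _ hab => ?_) h
  exact isCoprime_X_sub_C_of_isUnit_sub (sub_ne_zero.2 hab).isUnit

variable {F K : Type*} [Field F] [Fintype F] [Field K] [Algebra F K]

lemma mem_range_algebraMap_of_pow_card_eq_self {x : K} (hx : x ^ Fintype.card F = x) :
    x ∈ Set.range (algebraMap F K) := by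
  have hdeg := FiniteField.X_pow_card_sub_X_natDegree_eq F (Fintype.one_lt_card (α := F))
  have hroots : ((X ^ Fintype.card F - X : F[X]).map (algebraMap F K)).roots
      = univ.val.map (algebraMap F K) := by
    rw [← FiniteField.roots_X_pow_card_sub_X F]
    refine (roots_map_of_injective_of_card_eq_natDegree (algebraMap F K).injective ?_).symm
    rw [FiniteField.roots_X_pow_card_sub_X, hdeg]
    rfl
  have hx' : x ∈ ((X ^ Fintype.card F - X : F[X]).map (algebraMap F K)).roots := by
    rw [mem_roots (Polynomial.map_ne_zero (FiniteField.X_pow_card_sub_X_ne_zero F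
      (Fintype.one_lt_card (α := F))))]
    simp [hx]
  rw [hroots] at hx'
  obtain ⟨a, -, rfl⟩ := Multiset.mem_map.1 hx'
  exact ⟨a, rfl⟩

lemma prod_X_sub_C_mem_lifts {Z : Finset K} (hZ : ∀ z ∈ Z, z ^ Fintype.card F ∈ Z) :
    ∏ z ∈ Z, (X - C z) ∈ lifts (algebraMap F K) := by
  classical
  set frob : K →+* K := (FiniteField.frobeniusAlgHom F K).toRingHom
  have himage : Z.image frob = Z :=
    eq_of_subset_of_card_le (image_subset_iff.2 hZ) (card_image_of_injective _ frob.injective).ge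
  have hfix : (∏ z ∈ Z, (X - C z)).map frob = ∏ z ∈ Z, (X - C z) := by
    conv_rhs => rw [← himage, prod_image fun a _ b _ h => frob.injective h]
    simp [Polynomial.map_prod]
  rw [lifts_iff_coeff_lifts]
  intro i
  apply mem_range_algebraMap_of_pow_card_eq_self
  conv_rhs => rw [← hfix, coeff_map]
  rfl

section Finrank

open LinearMap

variable {F : Type*} [Field F]

lemma finrank_degreeLT (d : ℕ) : finrank F (degreeLT F d) = d := by
  rw [(degreeLTEquiv F d).finrank_eq, finrank_fin_fun]

lemma finrank_ker_modByMonicHom_comp_degreeLTEquiv_symm {g : F[X]} (hg : g.Monic) {n : ℕ}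
    (hn : g.natDegree ≤ n) :
    finrank F (ker (modByMonicHom g ∘ₗ (degreeLT F n).subtype ∘ₗ
      (degreeLTEquiv F n).symm.toLinearMap)) = n - g.natDegree := by
  set Φ := modByMonicHom g ∘ₗ (degreeLT F n).subtype ∘ₗ (degreeLTEquiv F n).symm.toLinearMap
  have hdeg : g.degree = g.natDegree := degree_eq_natDegree hg.ne_zero
  have hrange : range Φ = degreeLT F g.natDegree := by
    refine le_antisymm ?_ fun p hp => ?_
    · rintro _ ⟨c, rfl⟩
      exact mem_degreeLT.2 (hdeg ▸ degree_modByMonic_lt _ hg)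
    · refine ⟨degreeLTEquiv F n ⟨p, degreeLT_mono hn hp⟩, ?_⟩
      simpa [Φ] using (modByMonic_eq_self_iff hg).2 (hdeg ▸ mem_degreeLT.1 hp)
  have := finrank_range_add_finrank_ker Φ
  rw [hrange, finrank_degreeLT, finrank_fin_fun] at this
  omega

end Finrank

end Polynomial

-- `∏_{z ∈ Z} (X - z)` is fixed by the Frobenius, so it is the image of some `g ∈ F[X]`, and `N` is
-- the kernel of reducing a word's polynomial modulo `g`.
open LinearMap in
theorem finrank_eq_sub_card_of_pow_card_mem {F K : Type*} [Field F] [Fintype F] [Field K]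
    [Algebra F K] (n : ℕ) {Z : Finset K}
    (hZ : ∀ z ∈ Z, z ^ Fintype.card F ∈ Z) (hZn : #Z ≤ n) (N : Submodule F (Fin n → F))
    (hN : ∀ c, c ∈ N ↔ ∀ z ∈ Z, ∑ i, algebraMap F K (c i) * z ^ (i : ℕ) = 0) :
    finrank F N = n - #Z := by
  obtain ⟨g, hgmap, -, hg⟩ := lifts_and_degree_eq_and_monic (prod_X_sub_C_mem_lifts hZ)
    (monic_prod_of_monic _ _ fun z _ => monic_X_sub_C z)
  have hgdeg : g.natDegree = #Z := by
    rw [← natDegree_map_eq_of_injective (algebraMap F K).injective, hgmap,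
      natDegree_finsetProd_X_sub_C_eq_card Z (fun z => z)]
  have hNker : N = ker (modByMonicHom g ∘ₗ (degreeLT F n).subtype ∘ₗ
      (degreeLTEquiv F n).symm.toLinearMap) := by
    ext c
    rw [hN, mem_ker, coe_comp, Function.comp_apply, modByMonicHom_apply,
      modByMonic_eq_zero_iff_dvd hg, ← map_dvd_map' (algebraMap F K), hgmap,
      prod_X_sub_C_dvd_iff]
    refine forall₂_congr fun z _ => ?_
    simp [degreeLTEquiv, eval_map, eval₂_finsetSum]
  rw [hNker, finrank_ker_modByMonicHom_comp_degreeLTEquiv_symm hg (hgdeg ▸ hZn), hgdeg]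

section BinaryWeights

variable {m u : ℕ}

lemma four_pow_eq_two_pow (m : ℕ) : 4 ^ m = 2 ^ (2 * m) := by
  rw [pow_mul]; norm_num

lemma wt2_le (m u : ℕ) : wt2 m u ≤ 2 * m :=
  (card_filter_le _ _).trans (card_range _).le

@[simp] lemma wt2_zero (m : ℕ) : wt2 m 0 = 0 := by simp [wt2]

@[simp] lemma Ofun_zero (m : ℕ) : Ofun m 0 = 0 := by simp [Ofun]

@[simp] lemma Efun_zero (m : ℕ) : Efun m 0 = 0 := by simp [Efun]

lemma Ofun_four_pow_sub_one (m : ℕ) : Ofun m (4 ^ m - 1) = m := by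
  simp only [Ofun, four_pow_eq_two_pow, Nat.testBit_two_pow_sub_one, decide_eq_true_eq]
  rw [filter_true_of_mem fun i hi => by simp at hi; omega, card_range]

lemma Efun_four_pow_sub_one (m : ℕ) : Efun m (4 ^ m - 1) = m := by
  simp only [Efun, four_pow_eq_two_pow, Nat.testBit_two_pow_sub_one, decide_eq_true_eq]
  rw [filter_true_of_mem fun i hi => by simp at hi; omega, card_range]

lemma card_filter_wt2_eq (m c : ℕ) : #{u ∈ range (4 ^ m) | wt2 m u = c} = (2 * m).choose c := by
  rw [four_pow_eq_two_pow]
  exact Nat.card_filter_card_testBit_eq_choose (2 * m) c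

lemma card_filter_lt_wt2 {r : ℕ} (hr : r ≤ 2 * m) :
    #{u ∈ range (4 ^ m) | 2 * m - r < wt2 m u} = ∑ l ∈ range r, (2 * m).choose l := by
  rw [card_eq_sum_card_fiberwise (f := fun u => 2 * m - wt2 m u) (t := range r)]
  · refine sum_congr rfl fun l hl => ?_
    rw [filter_filter, ← Nat.choose_symm (by simp at hl; omega), ← card_filter_wt2_eq]
    congr 1
    refine filter_congr fun u _ => ?_
    have := wt2_le m u
    simp at hl
    omega
  · intro u hu
    have := wt2_le m u
    simp at hu ⊢
    omega

lemma wt2_rotateLeft {m u : ℕ} (hu : u < 2 ^ (2 * m + 2)) :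
    wt2 (m + 1) (rotateLeft (2 * m + 1) u) = wt2 (m + 1) u :=
  card_filter_testBit_rotateLeft hu

lemma Ofun_rotateLeft {m u : ℕ} (hu : u < 2 ^ (2 * m + 2)) :
    Ofun (m + 1) (rotateLeft (2 * m + 1) u) = Efun (m + 1) u := by
  unfold Ofun Efun
  congr 1
  refine filter_congr fun i hi => ?_
  rw [testBit_rotateLeft_succ hu (by simp at hi; omega)]

lemma Efun_rotateLeft {m u : ℕ} (hu : u < 2 ^ (2 * m + 2)) :
    Efun (m + 1) (rotateLeft (2 * m + 1) u) = Ofun (m + 1) u := by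
  simp only [Efun, Ofun, card_filter]
  rw [sum_range_succ', sum_range_succ, mul_zero, testBit_rotateLeft_zero hu]
  congr 1
  refine sum_congr rfl fun i hi => ?_
  rw [show 2 * (i + 1) = 2 * i + 1 + 1 by ring, testBit_rotateLeft_succ hu (by simp at hi; omega)]

end BinaryWeights

section Exponents

variable (m r : ℕ)

def lowWeightExps : Finset ℕ := {u ∈ Icc 1 (4 ^ m - 1) | wt2 m u ≤ 2 * m - r}

def thetaExps (k : ℕ) : Finset ℕ :=
  {u ∈ Icc 1 (4 ^ m - 1) | wt2 m u = 2 * m - r ∧ ((Ofun m u : ℤ) - Efun m u).natAbs = m - k}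

def zeroExps (I : Finset ℕ) : Finset ℕ := lowWeightExps m r \ I.biUnion (thetaExps m r)

variable {m r} {K : Type*} [CommMonoid K] {ζ : K}

lemma thetaExps_subset (k : ℕ) : thetaExps m r k ⊆ Icc 1 (4 ^ m - 1) := filter_subset _ _

lemma zeroExps_subset (I : Finset ℕ) : zeroExps m r I ⊆ Icc 1 (4 ^ m - 1) :=
  sdiff_subset.trans (filter_subset _ _)

lemma Zset_eq_image (hr : r ≤ 2 * m) :
    Zset m ζ ((r : ℤ) - 1) = (ζ ^ ·) '' ↑(lowWeightExps m r) := by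
  ext z
  simp only [Zset, lowWeightExps, coe_filter, mem_Icc]
  constructor
  · rintro ⟨u, hu0, huN, hwt, rfl⟩
    exact ⟨u, ⟨⟨hu0, huN⟩, by omega⟩, rfl⟩
  · rintro ⟨u, ⟨⟨hu0, huN⟩, hwt⟩, rfl⟩
    exact ⟨u, hu0, huN, by omega, rfl⟩

lemma ThetaR_eq_image (hr : r < 2 * m) :
    ThetaR m ζ r = (ζ ^ ·) '' {u | u ∈ Icc 1 (4 ^ m - 1) ∧ wt2 m u = 2 * m - r} := by
  ext z
  simp only [ThetaR, mem_Icc]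
  constructor
  · rintro ⟨u, huN, hwt, rfl⟩
    have hu0 : u ≠ 0 := by rintro rfl; simp at hwt; omega
    exact ⟨u, ⟨⟨by omega, huN⟩, hwt⟩, rfl⟩
  · rintro ⟨u, ⟨⟨-, huN⟩, hwt⟩, rfl⟩
    exact ⟨u, huN, hwt, rfl⟩

-- The exponent `0` may be traded for `4^m - 1`: both give `ζ^u = 1` and `O(u) = E(u)`.
lemma ThetaK_eq_image_s17 (hm : 1 ≤ m) (hζ : ζ ^ (4 ^ m - 1) = 1) (k : ℕ) :
    ThetaK m ζ k = (ζ ^ ·) ''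
      {u | u ∈ Icc 1 (4 ^ m - 1) ∧ ((Ofun m u : ℤ) - Efun m u).natAbs = m - k} := by
  have hN : 1 ≤ 4 ^ m - 1 := by
    have := Nat.pow_le_pow_right (show 0 < 4 by norm_num) hm
    omega
  ext z
  simp only [ThetaK, mem_Icc]
  constructor
  · rintro ⟨u, huN, hOE, rfl⟩
    rcases Nat.eq_zero_or_pos u with rfl | hu0
    · refine ⟨4 ^ m - 1, ⟨⟨hN, le_rfl⟩, ?_⟩, by simp [hζ]⟩
      simpa [Ofun_four_pow_sub_one, Efun_four_pow_sub_one] using hOE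
    · exact ⟨u, ⟨⟨hu0, huN⟩, hOE⟩, rfl⟩
  · rintro ⟨u, ⟨⟨-, huN⟩, hOE⟩, rfl⟩
    exact ⟨u, huN, hOE, rfl⟩

lemma image_thetaExps (hm : 1 ≤ m) (hr : r < 2 * m) (hζ : IsPrimitiveRoot ζ (4 ^ m - 1))
    (k : ℕ) : (ζ ^ ·) '' ↑(thetaExps m r k) = ThetaR m ζ r ∩ ThetaK m ζ k := by
  rw [ThetaR_eq_image hr, ThetaK_eq_image_s17 hm hζ.pow_eq_one,
    ← hζ.injOn_pow_Icc.image_inter (fun u hu => hu.1) (fun u hu => hu.1)]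
  congr 1
  ext u
  simp only [thetaExps, coe_filter, Set.mem_inter_iff, Set.mem_ofPred_eq]
  tauto

lemma ncard_ThetaR_inter_ThetaK (hm : 1 ≤ m) (hr : r < 2 * m)
    (hζ : IsPrimitiveRoot ζ (4 ^ m - 1)) (k : ℕ) :
    (ThetaR m ζ r ∩ ThetaK m ζ k).ncard = #(thetaExps m r k) := by
  rw [← image_thetaExps hm hr hζ,
    (hζ.injOn_pow_Icc.mono (coe_subset.2 (thetaExps_subset k))).ncard_image, Set.ncard_coe_finset]

lemma biUnion_thetaExps_subset (I : Finset ℕ) :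
    I.biUnion (thetaExps m r) ⊆ lowWeightExps m r :=
  biUnion_subset.2 fun _ _ _ hu => by
    simp only [thetaExps, lowWeightExps, mem_filter] at hu ⊢
    exact ⟨hu.1, hu.2.1.le⟩

lemma image_zeroExps (hm : 1 ≤ m) (hr : r < 2 * m) (hζ : IsPrimitiveRoot ζ (4 ^ m - 1))
    (I : Finset ℕ) : (ζ ^ ·) '' ↑(zeroExps m r I) = ZrI m ζ r ↑I := by
  have hinj : Set.InjOn (ζ ^ ·) ↑(lowWeightExps m r) :=
    hζ.injOn_pow_Icc.mono (coe_subset.2 (filter_subset _ _))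
  rw [zeroExps, coe_sdiff, hinj.image_sdiff_subset (coe_subset.2 (biUnion_thetaExps_subset I)),
    ZrI, Zset_eq_image hr.le, coe_biUnion, Set.image_iUnion₂]
  simp_rw [image_thetaExps hm hr hζ]

lemma lt_of_mem_zeroExps {u : ℕ} {I : Finset ℕ} (hu : u ∈ zeroExps (m + 1) r I) :
    u < 2 ^ (2 * m + 2) := by
  have := (mem_Icc.1 (zeroExps_subset I hu)).2
  rw [four_pow_eq_two_pow, mul_add, mul_one] at this
  have : 0 < 2 ^ (2 * m + 2) := by positivity
  omega

lemma rotateLeft_mem_zeroExps {u : ℕ} {I : Finset ℕ} (hu : u ∈ zeroExps (m + 1) r I) :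
    rotateLeft (2 * m + 1) u ∈ zeroExps (m + 1) r I := by
  have hlt := lt_of_mem_zeroExps hu
  have : rotateLeft (2 * m + 1) u < 2 ^ (2 * m + 2) := rotateLeft_lt hlt
  simp only [zeroExps, lowWeightExps, thetaExps, mem_sdiff, mem_filter, mem_biUnion, mem_Icc,
    not_exists, not_and] at hu ⊢
  rw [four_pow_eq_two_pow, mul_add, mul_one] at hu ⊢
  rw [wt2_rotateLeft hlt, Ofun_rotateLeft hlt, Efun_rotateLeft hlt, ← Int.natAbs_neg, neg_sub]
  exact ⟨⟨⟨rotateLeft_pos hlt (by omega), by omega⟩, hu.1.2⟩,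
    fun k hk _ => hu.2 k hk hu.1.1⟩

lemma pow_two_mem_image_zeroExps [DecidableEq K] {I : Finset ℕ}
    (hζ : ζ ^ (4 ^ (m + 1) - 1) = 1) {z : K} (hz : z ∈ (zeroExps (m + 1) r I).image (ζ ^ ·)) :
    z ^ 2 ∈ (zeroExps (m + 1) r I).image (ζ ^ ·) := by
  obtain ⟨u, hu, rfl⟩ := mem_image.1 hz
  have hζ' : ζ ^ (2 ^ (2 * m + 1 + 1) - 1) = 1 := by
    rw [four_pow_eq_two_pow] at hζ
    exact hζ
  exact mem_image.2 ⟨_, rotateLeft_mem_zeroExps hu, pow_rotateLeft hζ' (lt_of_mem_zeroExps hu)⟩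

lemma card_lowWeightExps_add (hr : r ≤ 2 * m) :
    #(lowWeightExps m r) + ∑ l ∈ range r, (2 * m).choose l = 4 ^ m - 1 := by
  have hcompl : {u ∈ range (4 ^ m) | 2 * m - r < wt2 m u}
      = {u ∈ Icc 1 (4 ^ m - 1) | ¬wt2 m u ≤ 2 * m - r} := by
    ext u
    simp only [mem_filter, mem_range, mem_Icc, not_le]
    have := Nat.one_le_pow m 4 (by norm_num)
    rcases Nat.eq_zero_or_pos u with rfl | hu0
    · simp
    · omega
  rw [← card_filter_lt_wt2 hr, lowWeightExps, hcompl, card_filter_add_card_filter_not,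
    Nat.card_Icc, Nat.add_sub_cancel]

lemma card_zeroExps_add {I : Finset ℕ} (hr : r ≤ 2 * m) (hI : ∀ k ∈ I, k ≤ m) :
    #(zeroExps m r I) + (∑ l ∈ range r, (2 * m).choose l + ∑ k ∈ I, #(thetaExps m r k))
      = 4 ^ m - 1 := by
  have hdisj : (I : Set ℕ).PairwiseDisjoint (thetaExps m r) := by
    intro k₁ hk₁ k₂ hk₂ hne
    refine disjoint_left.2 fun u hu₁ hu₂ => hne ?_
    simp only [thetaExps, mem_filter] at hu₁ hu₂
    have := hI k₁ hk₁
    have := hI k₂ hk₂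
    omega
  have hsub := biUnion_thetaExps_subset (m := m) (r := r) I
  have hle := card_le_card hsub
  rw [card_biUnion hdisj] at hle
  rw [zeroExps, card_sdiff_of_subset hsub, card_biUnion hdisj, ← card_lowWeightExps_add hr]
  omega

end Exponents

lemma finrank_CextCode {K : Type*} [CommRing K] [Algebra (ZMod 2) K] (m : ℕ) (ζ : K) (r : ℕ)
    (I : Set ℕ) :
    finrank (ZMod 2) (CextCode m ζ r I) = finrank (ZMod 2) (CstarCode m ζ r I) := by
  let init := (LinearMap.funLeft (ZMod 2) (ZMod 2) (Fin.castSucc (n := 4 ^ m - 1))).restrict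
    (p := CextCode m ζ r I) (q := CstarCode m ζ r I) fun d hd => hd.1
  refine (LinearEquiv.ofBijective init ⟨fun d e hde => ?_, fun c => ?_⟩).finrank_eq
  · have hinit : Fin.init d.1 = Fin.init e.1 := congrArg Subtype.val hde
    ext i
    refine Fin.lastCases ?_ (fun j => congrFun hinit j) i
    rw [d.2.2, e.2.2, hinit]
  · refine ⟨⟨Fin.snoc c.1 (∑ i, c.1 i), ?_⟩, Subtype.ext (Fin.init_snoc (α := fun _ => ZMod 2) _ _)⟩
    exact ⟨by rw [Fin.init_snoc]; exact c.2, by rw [Fin.snoc_last, Fin.init_snoc]⟩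

lemma finrank_CstarCode {K : Type*} [Field K] [Algebra (ZMod 2) K] {m r : ℕ} {ζ : K}
    (hζ : IsPrimitiveRoot ζ (4 ^ (m + 1) - 1)) (hr : r < 2 * (m + 1)) (I : Finset ℕ) :
    finrank (ZMod 2) (CstarCode (m + 1) ζ r ↑I) = 4 ^ (m + 1) - 1 - #(zeroExps (m + 1) r I) := by
  classical
  have hsub := zeroExps_subset (m := m + 1) (r := r) I
  have hZ : ZrI (m + 1) ζ r ↑I = ↑((zeroExps (m + 1) r I).image (ζ ^ ·)) := by
    rw [coe_image, image_zeroExps (by omega) hr hζ]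
  rw [← card_image_of_injOn (hζ.injOn_pow_Icc.mono (coe_subset.2 hsub))]
  refine finrank_eq_sub_card_of_pow_card_mem _ (fun z hz => ?_) (card_image_le.trans ?_) _
    fun c => ?_
  · rw [ZMod.card]
    exact pow_two_mem_image_zeroExps hζ.pow_eq_one hz
  · exact (card_le_card hsub).trans (Nat.card_Icc _ _).le
  · show (∀ z ∈ ZrI (m + 1) ζ r ↑I, _) ↔ _
    rw [hZ]
    rfl

theorem stmt17_general (m : ℕ) (K : Type*) [Field K] [Algebra (ZMod 2) K]
    (ζ : K) (hζ : IsPrimitiveRoot ζ (2 ^ (2 * m) - 1))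
    (r : ℕ) (hr : r < 2 * m) (I : Finset ℕ) (hI : ∀ k ∈ I, k ∈ Mset m r) :
    Module.finrank (ZMod 2) (CextCode m ζ r ↑I)
      = ∑ ℓ ∈ Finset.range r, Nat.choose (2 * m) ℓ
        + ∑ k ∈ I, (ThetaR m ζ r ∩ ThetaK m ζ k).ncard := by
  obtain ⟨m, rfl⟩ : ∃ m', m = m' + 1 := ⟨m - 1, by omega⟩
  rw [← four_pow_eq_two_pow] at hζ
  rw [finrank_CextCode, finrank_CstarCode hζ hr,
    sum_congr rfl fun k _ => ncard_ThetaR_inter_ThetaK (by omega) hr hζ k,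
    ← card_zeroExps_add hr.le fun k hk => (hI k hk).1]
  omega

/-- For `0 ≤ r < 2m` and `I ⊆ M_r`,
`dim_{𝔽₂} C(r,I,2m) = Σ_{ℓ=0}^{r-1} binom(2m,ℓ) + Σ_{k∈I} |Θ^{(r)}_k|`. -/
theorem stmt17 (m : ℕ) (hm : 1 ≤ m) (K : Type*) [Field K] [Algebra (ZMod 2) K]
    [IsAlgClosure (ZMod 2) K] (ζ : K) (hζ : IsPrimitiveRoot ζ (2 ^ (2 * m) - 1))
    (r : ℕ) (hr : r < 2 * m) (I : Finset ℕ) (hI : ∀ k ∈ I, k ∈ Mset m r) :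
    Module.finrank (ZMod 2) (CextCode m ζ r ↑I)
      = ∑ ℓ ∈ Finset.range r, Nat.choose (2 * m) ℓ
        + ∑ k ∈ I, (ThetaR m ζ r ∩ ThetaK m ζ k).ncard :=
  stmt17_general m K ζ hζ r hr I hI
end
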